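/- Let T be a Tambara functor on a finite group G and 𝔭 ⊊ T a proper ideal. Then 𝔭 is prime (in the element-wise sense on principal ideals of elements over transitive G-sets) if and only if for every pair of ideals 𝔦, 𝔧 ⊆ T, the containment 𝔦𝔧 ⊆ 𝔭 implies 𝔦 ⊆ 𝔭 or 𝔧 ⊆ 𝔭. -/

import Mathlib

set_option autoImplicit false

/-! Finite G-sets -/

structure GSet (G : Type) [Group G] : Type 1 where
  carrier : Type
  [mulAction : MulAction G carrier]
  [finite : Finite carrier]

attribute [instance] GSet.mulAction GSet.finite

/-- Equivariant maps of finite `G`-sets. -/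
structure GSetHom {G : Type} [Group G] (X Y : GSet G) : Type where
  toFun : X.carrier → Y.carrier
  map_smul : ∀ (g : G) (x : X.carrier), toFun (g • x) = g • toFun x

namespace GSetHom

variable {G : Type} [Group G]

def id (X : GSet G) : GSetHom X X := ⟨fun x => x, fun _ _ => rfl⟩

def comp {X Y Z : GSet G} (g : GSetHom Y Z) (f : GSetHom X Y) : GSetHom X Z :=
  ⟨fun x => g.toFun (f.toFun x), fun a x => by
    show g.toFun (f.toFun (a • x)) = a • g.toFun (f.toFun x)
    rw [f.map_smul, g.map_smul]⟩

end GSetHom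

namespace GSet

variable {G : Type} [Group G]

/-- Binary disjoint union of `G`-sets. -/
def sum (X Y : GSet G) : GSet G where
  carrier := X.carrier ⊕ Y.carrier

def inl (X Y : GSet G) : GSetHom X (X.sum Y) := ⟨Sum.inl, fun _ _ => rfl⟩

def inr (X Y : GSet G) : GSetHom Y (X.sum Y) := ⟨Sum.inr, fun _ _ => rfl⟩

instance : MulAction G Empty where
  smul _ x := x.elim
  one_smul x := x.elim
  mul_smul _ _ x := x.elim

/-- The empty `G`-set. -/
def empty (G : Type) [Group G] : GSet G where
  carrier := Empty

/-- Finite disjoint unions of `G`-sets. -/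
def sigma {n : ℕ} (Xs : Fin n → GSet G) : GSet G where
  carrier := Σ i, (Xs i).carrier

def sigmaIncl {n : ℕ} (Xs : Fin n → GSet G) (i : Fin n) : GSetHom (Xs i) (sigma Xs) :=
  ⟨fun x => ⟨i, x⟩, fun _ _ => rfl⟩

/-- The canonical pullback of two `G`-maps. -/
def pullback {X Y Z : GSet G} (f : GSetHom X Z) (g : GSetHom Y Z) : GSet G where
  carrier := { q : X.carrier × Y.carrier // f.toFun q.1 = g.toFun q.2 }
  mulAction :=
  { smul := fun a q => ⟨a • q.val, by
      show f.toFun (a • q.val.1) = g.toFun (a • q.val.2)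
      rw [f.map_smul, g.map_smul, q.property]⟩
    one_smul := fun q => Subtype.ext (one_smul G q.val)
    mul_smul := fun a b q => Subtype.ext (mul_smul a b q.val) }

def pbFst {X Y Z : GSet G} (f : GSetHom X Z) (g : GSetHom Y Z) :
    GSetHom (pullback f g) X := ⟨fun q => q.val.1, fun _ _ => rfl⟩

def pbSnd {X Y Z : GSet G} (f : GSetHom X Z) (g : GSetHom Y Z) :
    GSetHom (pullback f g) Y := ⟨fun q => q.val.2, fun _ _ => rfl⟩

/-- The complement of the image of a `G`-map, as a `G`-set. -/
def compl {X Y : GSet G} (f : GSetHom X Y) : GSet G where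
  carrier := { y : Y.carrier // ∀ x, f.toFun x ≠ y }
  mulAction :=
  { smul := fun g y => ⟨g • y.val, fun x h => y.property (g⁻¹ • x) (by
      rw [f.map_smul, h, inv_smul_smul])⟩
    one_smul := fun y => Subtype.ext (one_smul G y.val)
    mul_smul := fun a b y => Subtype.ext (mul_smul a b y.val) }

def complIncl {X Y : GSet G} (f : GSetHom X Y) : GSetHom (compl f) Y :=
  ⟨fun y => y.val, fun _ _ => rfl⟩

/-- Points of Tambara's dependent product `Π_f(A)`: pairs `(y, σ)` of a point `y : Y`
and a section `σ` of `p` on the fiber `f⁻¹(y)` (encoded as an `Option`-valued function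
supported exactly on the fiber). -/
def PiProp {X Y A : GSet G} (f : GSetHom X Y) (p : GSetHom A X)
    (s : Y.carrier × (X.carrier → Option A.carrier)) : Prop :=
  (∀ x, (s.2 x).isSome = true ↔ f.toFun x = s.1) ∧
  (∀ x a, s.2 x = some a → p.toFun a = x)

def PiCar {X Y A : GSet G} (f : GSetHom X Y) (p : GSetHom A X) : Type :=
  { s : Y.carrier × (X.carrier → Option A.carrier) // PiProp f p s }

instance optionFinite {α : Type} [Finite α] : Finite (Option α) :=
  Finite.of_equiv _ (Equiv.optionEquivSumPUnit.{0,0} α).symm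

instance piFinite {X Y A : GSet G} (f : GSetHom X Y) (p : GSetHom A X) :
    Finite (PiCar f p) := by
  unfold PiCar; infer_instance

def piSmul {X Y A : GSet G} (f : GSetHom X Y) (p : GSetHom A X) (g : G)
    (s : PiCar f p) : PiCar f p :=
  ⟨(g • s.val.1, fun x => (s.val.2 (g⁻¹ • x)).map (g • ·)), by
    constructor
    · intro x
      rw [Option.isSome_map, s.property.1 (g⁻¹ • x), f.map_smul]
      constructor
      · intro h; rw [← h, smul_inv_smul]
      · intro h; rw [h, inv_smul_smul]
    · intro x a ha
      rcases Option.map_eq_some_iff.mp ha with ⟨b, hb, rfl⟩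
      rw [p.map_smul, s.property.2 _ _ hb, smul_inv_smul]⟩

instance piAction {X Y A : GSet G} (f : GSetHom X Y) (p : GSetHom A X) :
    MulAction G (PiCar f p) where
  smul := piSmul f p
  one_smul s := by
    apply Subtype.ext
    refine Prod.ext (one_smul G s.val.1) ?_
    funext x
    show (s.val.2 ((1:G)⁻¹ • x)).map ((1:G) • ·) = s.val.2 x
    rw [inv_one, one_smul]
    cases h : s.val.2 x <;> simp [one_smul]
  mul_smul a b s := by
    apply Subtype.ext
    refine Prod.ext (mul_smul a b s.val.1) ?_
    funext x
    show (s.val.2 ((a * b)⁻¹ • x)).map ((a * b) • ·)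
        = ((s.val.2 (b⁻¹ • (a⁻¹ • x))).map (b • ·)).map (a • ·)
    rw [Option.map_map, mul_inv_rev, mul_smul]
    cases h : s.val.2 (b⁻¹ • a⁻¹ • x) <;> simp [mul_smul, Function.comp]

/-- Tambara's dependent product `Π_f(A)` as a `G`-set. -/
def piObj {X Y A : GSet G} (f : GSetHom X Y) (p : GSetHom A X) : GSet G where
  carrier := PiCar f p

/-- The projection `π : Π_f(A) → Y`. -/
def piPr {X Y A : GSet G} (f : GSetHom X Y) (p : GSetHom A X) :
    GSetHom (piObj f p) Y := ⟨fun s => s.val.1, fun _ _ => rfl⟩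

theorem optGet {α : Type} {o : Option α} {a : α} (h : o = some a) :
    ∀ hs : o.isSome = true, o.get hs = a := by subst h; intro _; rfl

/-- The evaluation map `λ : X ×_Y Π_f(A) → A`, `(x, (y, σ)) ↦ σ(x)`. -/
def piEval {X Y A : GSet G} (f : GSetHom X Y) (p : GSetHom A X) :
    GSetHom (pullback f (piPr f p)) A where
  toFun z := (z.val.2.val.2 z.val.1).get (by
    rw [z.val.2.property.1 z.val.1]; exact z.property)
  map_smul g z := by
    have hs : (z.val.2.val.2 z.val.1).isSome = true := by
      rw [z.val.2.property.1 z.val.1]; exact z.property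
    obtain ⟨a, ha⟩ := Option.isSome_iff_exists.mp hs
    have h1 : z.val.2.val.2 z.val.1 = some a := ha
    have h2 : (g • z).val.2.val.2 (g • z).val.1 = some (g • a) := by
      show (z.val.2.val.2 (g⁻¹ • (g • z.val.1))).map (g • ·) = some (g • a)
      rw [inv_smul_smul, h1]; rfl
    simp only [optGet h2, optGet h1]

end GSet

namespace GSet

/-- A transitive (nonempty) finite `G`-set. -/
def IsTransitive {G : Type} [Group G] (X : GSet G) : Prop :=
  Nonempty X.carrier ∧ MulAction.IsPretransitive G X.carrier

end GSet

/-! Tambara functors -/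

/-- The underlying system of commutative rings of a Tambara functor. -/
structure TamData (G : Type) [Group G] : Type 1 where
  obj : GSet G → Type
  ring : ∀ X, CommRing (obj X)

attribute [instance] TamData.ring

/-- A Tambara functor on the finite group `G`: a system of commutative rings `obj X`
indexed by finite `G`-sets, together with restrictions `res`, additive transfers `tr`
and multiplicative transfers `nm`, functorial, additive, satisfying the Mackey
base-change conditions, the projection formula, and Tambara's distributive law. -/
structure TambaraFunctor (G : Type) [Group G] extends TamData G where
  res : ∀ {X Y : GSet G}, GSetHom X Y → (obj Y →+* obj X)
  tr : ∀ {X Y : GSet G}, GSetHom X Y → (obj X →+ obj Y)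
  nm : ∀ {X Y : GSet G}, GSetHom X Y → (obj X →* obj Y)
  res_id : ∀ {X : GSet G} (x : obj X), res (GSetHom.id X) x = x
  res_comp : ∀ {X Y Z : GSet G} (f : GSetHom X Y) (g : GSetHom Y Z) (z : obj Z),
    res f (res g z) = res (g.comp f) z
  tr_id : ∀ {X : GSet G} (x : obj X), tr (GSetHom.id X) x = x
  tr_comp : ∀ {X Y Z : GSet G} (f : GSetHom X Y) (g : GSetHom Y Z) (x : obj X),
    tr g (tr f x) = tr (g.comp f) x
  nm_id : ∀ {X : GSet G} (x : obj X), nm (GSetHom.id X) x = x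
  nm_comp : ∀ {X Y Z : GSet G} (f : GSetHom X Y) (g : GSetHom Y Z) (x : obj X),
    nm g (nm f x) = nm (g.comp f) x
  /-- additivity on binary disjoint unions -/
  add_bij : ∀ X Y : GSet G, Function.Bijective
    (fun t : obj (X.sum Y) => (res (GSet.inl X Y) t, res (GSet.inr X Y) t))
  /-- `T(∅)` is the zero ring -/
  empty_subsingleton : ∀ x y : obj (GSet.empty G), x = y
  /-- Mackey base change for the additive transfer -/
  tr_bc : ∀ {X Y Z : GSet G} (f : GSetHom X Z) (g : GSetHom Y Z) (x : obj X),
    res g (tr f x) = tr (GSet.pbSnd f g) (res (GSet.pbFst f g) x)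
  /-- Mackey base change for the multiplicative transfer -/
  nm_bc : ∀ {X Y Z : GSet G} (f : GSetHom X Z) (g : GSetHom Y Z) (x : obj X),
    res g (nm f x) = nm (GSet.pbSnd f g) (res (GSet.pbFst f g) x)
  /-- the projection formula -/
  proj_formula : ∀ {X Y : GSet G} (f : GSetHom X Y) (a : obj X) (b : obj Y),
    tr f (a * res f b) = tr f a * b
  /-- the norm of zero is the additive transfer of `1` from the complement of the image -/
  nm_zero : ∀ {X Y : GSet G} (f : GSetHom X Y), nm f (0 : obj X) = tr (GSet.complIncl f) 1
  /-- Tambara's distributive law, via the canonical exponential diagram on `Π_f(A)` -/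
  distrib : ∀ {X Y A : GSet G} (f : GSetHom X Y) (p : GSetHom A X) (a : obj A),
    nm f (tr p a) = tr (GSet.piPr f p)
      (nm (GSet.pbSnd f (GSet.piPr f p)) (res (GSet.piEval f p) a))

namespace TambaraFunctor

variable {G : Type} [Group G]

/-- `f_!(x) = f_•(x) - f_•(0)`. -/
def shriek (T : TambaraFunctor G) {X Y : GSet G} (f : GSetHom X Y) (x : T.obj X) :
    T.obj Y := T.nm f x - T.nm f 0

end TambaraFunctor

/-- A morphism of Tambara functors: a family of ring homomorphisms natural with respect
to restrictions, additive transfers and multiplicative transfers. -/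
structure TamHom {G : Type} [Group G] (T S : TambaraFunctor G) where
  app : ∀ X : GSet G, T.obj X →+* S.obj X
  app_res : ∀ {X Y : GSet G} (f : GSetHom X Y) (y : T.obj Y),
    app X (T.res f y) = S.res f (app Y y)
  app_tr : ∀ {X Y : GSet G} (f : GSetHom X Y) (x : T.obj X),
    app Y (T.tr f x) = S.tr f (app X x)
  app_nm : ∀ {X Y : GSet G} (f : GSetHom X Y) (x : T.obj X),
    app Y (T.nm f x) = S.nm f (app X x)

namespace TambaraFunctor

variable {G : Type} [Group G]

/-- An ideal of a Tambara functor: a family of ideals closed under restrictions,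
additive transfers, and satisfying `f_•(𝔦(X)) ⊆ f_•(0) + 𝔦(Y)`
(equivalently, closed under `f_!`). -/
structure IsIdeal (T : TambaraFunctor G) (I : ∀ X : GSet G, Ideal (T.obj X)) : Prop where
  res_mem : ∀ {X Y : GSet G} (f : GSetHom X Y) {y : T.obj Y}, y ∈ I Y → T.res f y ∈ I X
  tr_mem : ∀ {X Y : GSet G} (f : GSetHom X Y) {x : T.obj X}, x ∈ I X → T.tr f x ∈ I Y
  shriek_mem : ∀ {X Y : GSet G} (f : GSetHom X Y) {x : T.obj X},
    x ∈ I X → T.shriek f x ∈ I Y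

/-- The ideal generated by a family of subsets: the intersection of all ideals
containing it. -/
def gen (T : TambaraFunctor G) (S : ∀ X : GSet G, Set (T.obj X)) (X : GSet G) :
    Ideal (T.obj X) :=
  ⨅ (I : ∀ Y : GSet G, Ideal (T.obj Y)) (_ : T.IsIdeal I) (_ : ∀ Y, S Y ⊆ ↑(I Y)), I X

/-- The family of subsets consisting of the single element `a ∈ T(A)`. -/
def single (T : TambaraFunctor G) (A : GSet G) (a : T.obj A) (X : GSet G) :
    Set (T.obj X) := { x | ∃ h : A = X, h ▸ a = x }

/-- The principal ideal `⟨a⟩` generated by `a ∈ T(A)`. -/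
def principal (T : TambaraFunctor G) (A : GSet G) (a : T.obj A) :
    ∀ X : GSet G, Ideal (T.obj X) := T.gen (T.single A a)

/-- The defining set of the product of two ideals. -/
def mulSet (T : TambaraFunctor G) (I J : ∀ X : GSet G, Ideal (T.obj X)) (X : GSet G) :
    Set (T.obj X) :=
  { x | ∃ (A : GSet G) (p : GSetHom A X) (a b : T.obj A),
      a ∈ I A ∧ b ∈ J A ∧ x = T.tr p (a * b) }

/-- The product of two ideals of a Tambara functor. -/
def mulIdl (T : TambaraFunctor G) (I J : ∀ X : GSet G, Ideal (T.obj X)) (X : GSet G) :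
    Ideal (T.obj X) := Ideal.span (T.mulSet I J X)

/-- Iterated products of ideals. -/
def mulMulti (T : TambaraFunctor G) :
    List (∀ X : GSet G, Ideal (T.obj X)) → ∀ X : GSet G, Ideal (T.obj X)
  | [] => fun _ => ⊤
  | I :: ls => T.mulIdl I (T.mulMulti ls)

/-- A prime ideal of a Tambara functor. -/
structure IsPrime (T : TambaraFunctor G) (P : ∀ X : GSet G, Ideal (T.obj X)) : Prop where
  isIdeal : T.IsIdeal P
  ne_top : ∃ X : GSet G, P X ≠ ⊤
  mem_or_mem : ∀ {X Y : GSet G}, X.IsTransitive → Y.IsTransitive →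
    ∀ {a : T.obj X} {b : T.obj Y},
      (∀ Z : GSet G, T.mulIdl (T.principal X a) (T.principal Y b) Z ≤ P Z) →
      a ∈ P X ∨ b ∈ P Y

/-- A maximal ideal of a Tambara functor. -/
structure IsMaximal (T : TambaraFunctor G) (M : ∀ X : GSet G, Ideal (T.obj X)) : Prop where
  isIdeal : T.IsIdeal M
  ne_top : ∃ X : GSet G, M X ≠ ⊤
  eq_of_le : ∀ K : ∀ X : GSet G, Ideal (T.obj X), T.IsIdeal K →
    (∀ X, M X ≤ K X) → (K = M ∨ ∀ X, K X = ⊤)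

end TambaraFunctor

namespace GSet

/-- The `G`-set `G/e`, i.e. `G` with the left regular action. -/
def regular (G : Type) [Group G] [Finite G] : GSet G where
  carrier := G

/-- Right multiplication `G/e → G/e`, an equivariant map. -/
def rightMul {G : Type} [Group G] [Finite G] (g : G) :
    GSetHom (regular G) (regular G) :=
  ⟨fun x => (id x : G) * g, fun a x => mul_assoc a x g⟩

end GSet

/-! Over `X = S ⊔ Sᶜ` the norms of `0` along the two summand inclusions are complementary
idempotents, and multiplying by either one is the transfer of a restriction to the other summand.
So an ideal of a Tambara functor is detected on the summands of any decomposition, hence on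
orbits: an element outside `𝔭` restricts to an element outside `𝔭` over some transitive
`G`-set. Ideals `𝔦, 𝔧 ⊄ 𝔭` therefore contain principal ideals `⟨a⟩, ⟨b⟩ ⊄ 𝔭` generated over
transitive `G`-sets; conversely, principal ideals are ideals. -/

section

variable {G : Type} [Group G]

namespace GSetHom

theorem ext {X Y : GSet G} {f g : GSetHom X Y} (h : f.toFun = g.toFun) : f = g := by
  cases f; cases g; cases h; rfl

end GSetHom

namespace GSet

def toEmpty (X : GSet G) (hX : IsEmpty X.carrier) : GSetHom X (empty G) :=
  ⟨hX.elim, fun _ x => hX.elim x⟩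

def fromEmpty (X : GSet G) : GSetHom (empty G) X :=
  ⟨Empty.elim, fun _ x => x.elim⟩

def complInrToLeft (X Y : GSet G) : GSetHom (compl (inr X Y)) X where
  toFun
    | ⟨Sum.inl x, _⟩ => x
    | ⟨Sum.inr y, h⟩ => absurd rfl (h y)
  map_smul _
    | ⟨Sum.inl _, _⟩ => rfl
    | ⟨Sum.inr y, h⟩ => absurd rfl (h y)

def complInlToRight (X Y : GSet G) : GSetHom (compl (inl X Y)) Y where
  toFun
    | ⟨Sum.inr y, _⟩ => y
    | ⟨Sum.inl x, h⟩ => absurd rfl (h x)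
  map_smul _
    | ⟨Sum.inr _, _⟩ => rfl
    | ⟨Sum.inl x, h⟩ => absurd rfl (h x)

theorem inl_comp_complInrToLeft (X Y : GSet G) :
    (inl X Y).comp (complInrToLeft X Y) = complIncl (inr X Y) :=
  GSetHom.ext <| funext fun
    | ⟨Sum.inl _, _⟩ => rfl
    | ⟨Sum.inr y, h⟩ => absurd rfl (h y)

theorem inr_comp_complInlToRight (X Y : GSet G) :
    (inr X Y).comp (complInlToRight X Y) = complIncl (inl X Y) :=
  GSetHom.ext <| funext fun
    | ⟨Sum.inr _, _⟩ => rfl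
    | ⟨Sum.inl x, h⟩ => absurd rfl (h x)

abbrev sub (X : GSet G) (S : SubMulAction G X.carrier) : GSet G where
  carrier := S

def subIncl (X : GSet G) (S : SubMulAction G X.carrier) : GSetHom (X.sub S) X :=
  ⟨Subtype.val, fun _ _ => rfl⟩

def sumSubCompl (X : GSet G) (S : SubMulAction G X.carrier) :
    GSetHom ((X.sub S).sum (X.sub Sᶜ)) X :=
  ⟨Sum.elim Subtype.val Subtype.val, by rintro _ (_ | _) <;> rfl⟩

open scoped Classical in
noncomputable def toSumSubCompl (X : GSet G) (S : SubMulAction G X.carrier) :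
    GSetHom X ((X.sub S).sum (X.sub Sᶜ)) where
  toFun x := if h : x ∈ S then .inl ⟨x, h⟩ else .inr ⟨x, h⟩
  map_smul g x := by
    dsimp only [GSet.sum]
    by_cases h : x ∈ S
    · rw [dif_pos h, dif_pos (S.smul_mem g h)]
      rfl
    · rw [dif_neg h, dif_neg fun hg => h (by simpa using S.smul_mem g⁻¹ hg)]
      rfl

theorem sumSubCompl_comp_toSumSubCompl (X : GSet G) (S : SubMulAction G X.carrier) :
    (X.sumSubCompl S).comp (X.toSumSubCompl S) = GSetHom.id X := by
  refine GSetHom.ext (funext fun x => ?_)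
  by_cases h : x ∈ S
  · exact congrArg (Sum.elim Subtype.val Subtype.val) (dif_pos h)
  · exact congrArg (Sum.elim Subtype.val Subtype.val) (dif_neg h)

def orbit (X : GSet G) (x : X.carrier) : SubMulAction G X.carrier :=
  ⟨MulAction.orbit G x, fun g _ hy => MulAction.mem_orbit_of_mem_orbit g hy⟩

theorem isTransitive_sub_orbit (X : GSet G) (x : X.carrier) :
    (X.sub (X.orbit x)).IsTransitive := by
  refine ⟨⟨⟨x, MulAction.mem_orbit_self x⟩⟩, ⟨?_⟩⟩
  rintro ⟨_, g, rfl⟩ ⟨_, h, rfl⟩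
  exact ⟨h * g⁻¹, Subtype.ext (by
    show (h * g⁻¹) • g • x = h • x
    rw [smul_smul, inv_mul_cancel_right])⟩

theorem card_sub_compl_orbit_lt (X : GSet G) (x : X.carrier) :
    Nat.card (X.sub (X.orbit x)ᶜ).carrier < Nat.card X.carrier :=
  Finite.card_subtype_lt (p := (· ∈ (X.orbit x)ᶜ)) (not_not.mpr (MulAction.mem_orbit_self x))

end GSet

namespace TambaraFunctor

variable (T : TambaraFunctor G)

theorem subsingleton_of_isEmpty {X : GSet G} (hX : IsEmpty X.carrier) :
    Subsingleton (T.obj X) := by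
  have hid : (X.fromEmpty).comp (X.toEmpty hX) = GSetHom.id X := GSetHom.ext (funext hX.elim)
  refine ⟨fun a b => ?_⟩
  rw [← T.res_id a, ← T.res_id b, ← hid, ← T.res_comp, ← T.res_comp,
    T.empty_subsingleton (T.res _ a)]

theorem res_nm_zero_self {X Y : GSet G} (f : GSetHom X Y) : T.res f (T.nm f 0) = 0 := by
  have hempty : IsEmpty (GSet.compl (GSet.pbSnd f f)).carrier :=
    ⟨fun ⟨x, hx⟩ => hx ⟨(x, x), rfl⟩ rfl⟩
  rw [T.nm_bc, map_zero, T.nm_zero, (T.subsingleton_of_isEmpty hempty).elim 1 0, map_zero]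

theorem res_nm_zero_of_disjoint {A B Z : GSet G} (f : GSetHom A Z) (g : GSetHom B Z)
    (hfg : ∀ a b, f.toFun a ≠ g.toFun b) : T.res g (T.nm f 0) = 1 := by
  have hempty : IsEmpty (GSet.pullback f g).carrier := ⟨fun q => hfg _ _ q.property⟩
  rw [T.nm_bc, map_zero, (T.subsingleton_of_isEmpty hempty).elim 0 1, map_one]

theorem nm_inr_zero_add_nm_inl_zero (X Y : GSet G) :
    T.nm (GSet.inr X Y) 0 + T.nm (GSet.inl X Y) 0 = 1 := by
  refine (T.add_bij X Y).1 (Prod.ext ?_ ?_) <;> dsimp only <;>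
    simp only [map_add, map_one, res_nm_zero_self, zero_add, add_zero]
  · exact T.res_nm_zero_of_disjoint _ _ fun _ _ => Sum.inr_ne_inl
  · exact T.res_nm_zero_of_disjoint _ _ fun _ _ => Sum.inl_ne_inr

theorem mem_gen_iff {S : ∀ X : GSet G, Set (T.obj X)} {X : GSet G} {x : T.obj X} :
    x ∈ T.gen S X ↔
      ∀ I : ∀ Y : GSet G, Ideal (T.obj Y), T.IsIdeal I → (∀ Y, S Y ⊆ I Y) → x ∈ I X := by
  simp only [gen, Submodule.mem_iInf]

theorem isIdeal_gen (S : ∀ X : GSet G, Set (T.obj X)) : T.IsIdeal (T.gen S) where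
  res_mem f _ hy := T.mem_gen_iff.mpr fun I hI hS => hI.res_mem f (T.mem_gen_iff.mp hy I hI hS)
  tr_mem f _ hx := T.mem_gen_iff.mpr fun I hI hS => hI.tr_mem f (T.mem_gen_iff.mp hx I hI hS)
  shriek_mem f _ hx :=
    T.mem_gen_iff.mpr fun I hI hS => hI.shriek_mem f (T.mem_gen_iff.mp hx I hI hS)

theorem mem_principal_self (A : GSet G) (a : T.obj A) : a ∈ T.principal A a A :=
  T.mem_gen_iff.mpr fun _ _ hS => hS A ⟨rfl, rfl⟩

theorem mulIdl_mono {I I' J J' : ∀ X : GSet G, Ideal (T.obj X)} (hI : ∀ X, I X ≤ I' X)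
    (hJ : ∀ X, J X ≤ J' X) (X : GSet G) : T.mulIdl I J X ≤ T.mulIdl I' J' X :=
  Ideal.span_mono fun _ ⟨A, p, a, b, ha, hb, hx⟩ => ⟨A, p, a, b, hI A ha, hJ A hb, hx⟩

namespace IsIdeal

variable {T} {P : ∀ X : GSet G, Ideal (T.obj X)}

/-- By `nm_zero` and the projection formula, `f_•(0) * t` is the transfer of the restriction of
`t` along `Z ∖ f(A) → Z`. -/
theorem nm_zero_mul_mem (hP : T.IsIdeal P) {A B Z : GSet G} {f : GSetHom A Z}
    {g : GSetHom B Z} (k : GSetHom (GSet.compl f) B) (hk : g.comp k = GSet.complIncl f)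
    {t : T.obj Z} (ht : T.res g t ∈ P B) : T.nm f 0 * t ∈ P Z := by
  have hres : T.res (GSet.complIncl f) t ∈ P (GSet.compl f) := by
    rw [← hk, ← T.res_comp]
    exact hP.res_mem k ht
  rw [T.nm_zero, ← T.proj_formula, one_mul]
  exact hP.tr_mem _ hres

theorem mem_of_res_inl_mem_of_res_inr_mem (hP : T.IsIdeal P) {X Y : GSet G}
    {t : T.obj (X.sum Y)} (hX : T.res (GSet.inl X Y) t ∈ P X)
    (hY : T.res (GSet.inr X Y) t ∈ P Y) : t ∈ P (X.sum Y) := by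
  rw [← one_mul t, ← T.nm_inr_zero_add_nm_inl_zero X Y, add_mul]
  exact add_mem (hP.nm_zero_mul_mem _ (GSet.inl_comp_complInrToLeft X Y) hX)
    (hP.nm_zero_mul_mem _ (GSet.inr_comp_complInlToRight X Y) hY)

theorem mem_of_res_subIncl_mem (hP : T.IsIdeal P) {X : GSet G} (S : SubMulAction G X.carrier)
    {t : T.obj X} (hS : T.res (X.subIncl S) t ∈ P (X.sub S))
    (hSc : T.res (X.subIncl Sᶜ) t ∈ P (X.sub Sᶜ)) : t ∈ P X := by
  have hsum : T.res (X.sumSubCompl S) t ∈ P _ :=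
    hP.mem_of_res_inl_mem_of_res_inr_mem (by rwa [T.res_comp]) (by rwa [T.res_comp])
  simpa only [T.res_comp, GSet.sumSubCompl_comp_toSumSubCompl, T.res_id] using
    hP.res_mem (X.toSumSubCompl S) hsum

theorem exists_isTransitive_res_notMem (hP : T.IsIdeal P) {X : GSet G} {a : T.obj X}
    (ha : a ∉ P X) : ∃ (O : GSet G) (f : GSetHom O X), O.IsTransitive ∧ T.res f a ∉ P O := by
  induction hn : Nat.card X.carrier using Nat.strong_induction_on generalizing X with
  | _ n ih =>
  rcases isEmpty_or_nonempty X.carrier with hX | hX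
  · exact absurd ((T.subsingleton_of_isEmpty hX).elim a 0 ▸ zero_mem _) ha
  obtain ⟨x⟩ := hX
  by_cases hO : T.res (X.subIncl (X.orbit x)) a ∈ P _
  · have hC : T.res (X.subIncl (X.orbit x)ᶜ) a ∉ P _ :=
      fun hC => ha (hP.mem_of_res_subIncl_mem _ hO hC)
    obtain ⟨O, f, hOt, hf⟩ := ih _ (hn ▸ X.card_sub_compl_orbit_lt x) hC rfl
    exact ⟨O, (X.subIncl _).comp f, hOt, by rwa [← T.res_comp]⟩
  · exact ⟨_, _, X.isTransitive_sub_orbit x, hO⟩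

theorem principal_le {I : ∀ X : GSet G, Ideal (T.obj X)} (hI : T.IsIdeal I)
    {A : GSet G} {a : T.obj A} (ha : a ∈ I A) (X : GSet G) : T.principal A a X ≤ I X :=
  fun _ hx => (mem_gen_iff T).mp hx I hI fun _ _ ⟨h, hs⟩ => by subst h hs; exact ha

end IsIdeal

end TambaraFunctor

end

theorem isPrime_iff_ideal_mul_general (G : Type) [Group G] (T : TambaraFunctor G)
    (P : ∀ X : GSet G, Ideal (T.obj X)) (hP : T.IsIdeal P)
    (hne : ∃ X : GSet G, P X ≠ ⊤) :
    T.IsPrime P ↔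
      ∀ I J : ∀ X : GSet G, Ideal (T.obj X), T.IsIdeal I → T.IsIdeal J →
        (∀ X : GSet G, T.mulIdl I J X ≤ P X) →
        (∀ X : GSet G, I X ≤ P X) ∨ (∀ X : GSet G, J X ≤ P X) := by
  refine ⟨fun hPrime I J hI hJ hIJ => ?_, fun h => ⟨hP, hne, fun {X Y} _ _ {a b} hab => ?_⟩⟩
  · by_contra! hcon
    obtain ⟨⟨X, hX⟩, ⟨Y, hY⟩⟩ := hcon
    obtain ⟨a, haI, haP⟩ := SetLike.not_le_iff_exists.mp hX
    obtain ⟨b, hbJ, hbP⟩ := SetLike.not_le_iff_exists.mp hY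
    obtain ⟨O₁, f₁, hO₁, ha⟩ := hP.exists_isTransitive_res_notMem haP
    obtain ⟨O₂, f₂, hO₂, hb⟩ := hP.exists_isTransitive_res_notMem hbP
    have hsub : ∀ Z, T.mulIdl (T.principal O₁ (T.res f₁ a)) (T.principal O₂ (T.res f₂ b)) Z ≤ P Z :=
      fun Z => (T.mulIdl_mono (hI.principal_le (hI.res_mem f₁ haI))
        (hJ.principal_le (hJ.res_mem f₂ hbJ)) Z).trans (hIJ Z)
    exact (hPrime.mem_or_mem hO₁ hO₂ hsub).elim ha hb
  · exact (h _ _ (T.isIdeal_gen _) (T.isIdeal_gen _) hab).imp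
      (· X (T.mem_principal_self X a)) (· Y (T.mem_principal_self Y b))

/-- a proper ideal `𝔭` is prime iff for all ideals `𝔦, 𝔧`,
`𝔦𝔧 ⊆ 𝔭` implies `𝔦 ⊆ 𝔭` or `𝔧 ⊆ 𝔭`. -/
theorem isPrime_iff_ideal_mul (G : Type) [Group G] [Finite G] (T : TambaraFunctor G)
    (hT : ∃ X : GSet G, Nontrivial (T.obj X))
    (P : ∀ X : GSet G, Ideal (T.obj X)) (hP : T.IsIdeal P)
    (hne : ∃ X : GSet G, P X ≠ ⊤) :
    T.IsPrime P ↔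
      ∀ I J : ∀ X : GSet G, Ideal (T.obj X), T.IsIdeal I → T.IsIdeal J →
        (∀ X : GSet G, T.mulIdl I J X ≤ P X) →
        (∀ X : GSet G, I X ≤ P X) ∨ (∀ X : GSet G, J X ≤ P X) :=
  isPrime_iff_ideal_mul_general G T P hP hne
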